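/- arXiv:math/0703092 — 6 statements merged into one kernel-verified Lean document; each statement's English description precedes it below -/
import Mathlib

section
/- Let E be a real Banach space, y₀ ∈ E, ε ≥ 0, and let f : E → E and Df : E → (E →L[ℝ] E) be such that Df is a Gateaux derivative of f on the closed ball of radius 2 centred at y₀, and such that for every y in that closed ball one has (Df y − Df y₀) '' closedBall 0 1 ⊆ ε • ((Df y₀) '' closedBall 0 1). Then for all y₁, y₂ in the closed ball of radius 2 centred at y₀ one has ‖f y₂ − f y₁‖ ≤ (1 + ε) · ‖Df y₀‖ · ‖y₂ − y₁‖; in particular f is Lipschitz, hence continuous, on that ball. -/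
/-!
The inclusion of images of the unit ball bounds `‖Df y - Df y₀‖` by `ε * ‖Df y₀‖`, hence
`‖Df y‖ ≤ (1 + ε) * ‖Df y₀‖` on the ball. The mean value inequality along a segment only sees
the derivative of `t ↦ f (y₁ + t • (y₂ - y₁))`, which the Gateaux derivative provides, and the
ball is convex.
-/

open Pointwise Metric

variable {E : Type*} [NormedAddCommGroup E] [NormedSpace ℝ E]

/-- `Df` is a Gateaux derivative of `f` on the set `S`: for every `y ∈ S` and every
direction `v`, the map `t ↦ f (y + t • v)` has derivative `Df y v` at `t = 0`. -/
def HasGateauxDerivOn (f : E → E) (Df : E → E →L[ℝ] E) (S : Set E) : Prop :=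
  ∀ y ∈ S, ∀ v : E, HasDerivAt (fun t : ℝ => f (y + t • v)) (Df y v) 0

theorem ContinuousLinearMap.opNorm_le_of_image_closedBall_subset
    {F : Type*} [NormedAddCommGroup F] [NormedSpace ℝ F] {S T : E →L[ℝ] F} {ε : ℝ}
    (hε : 0 ≤ ε) (h : ⇑S '' closedBall (0 : E) 1 ⊆ ε • (⇑T '' closedBall (0 : E) 1)) :
    ‖S‖ ≤ ε * ‖T‖ := by
  refine S.opNorm_le_of_unit_norm (by positivity) fun x hx => ?_
  obtain ⟨_, ⟨z, hz, rfl⟩, hSx⟩ := h ⟨x, by simp [hx], rfl⟩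
  rw [← hSx, norm_smul, Real.norm_of_nonneg hε]
  gcongr
  exact T.unit_le_opNorm z (mem_closedBall_zero_iff.mp hz)

namespace HasGateauxDerivOn

variable {f : E → E} {Df : E → E →L[ℝ] E} {S : Set E}

theorem hasDerivAt_comp_line (hf : HasGateauxDerivOn f Df S) {x v : E} {t : ℝ}
    (ht : x + t • v ∈ S) : HasDerivAt (fun s : ℝ => f (x + s • v)) (Df (x + t • v) v) t := by
  have h : HasDerivAt (fun s : ℝ => f (x + t • v + s • v)) (Df (x + t • v) v) (t - t) := by
    simpa using hf _ ht v
  convert h.comp_sub_const t t using 2 with s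
  congr 1
  module

theorem norm_sub_le_of_opNorm_le (hf : HasGateauxDerivOn f Df S) (hS : Convex ℝ S) {C : ℝ}
    (hC : ∀ y ∈ S, ‖Df y‖ ≤ C) {x y : E} (hx : x ∈ S) (hy : y ∈ S) :
    ‖f y - f x‖ ≤ C * ‖y - x‖ := by
  have hseg : ∀ t ∈ Set.Icc (0 : ℝ) 1, x + t • (y - x) ∈ S := fun t ht =>
    hS.add_smul_sub_mem hx hy ht
  have h := norm_image_sub_le_of_norm_deriv_le_segment_01'
    (fun t ht => (hf.hasDerivAt_comp_line (hseg t ht)).hasDerivWithinAt)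
    (fun t ht => (Df _).le_of_opNorm_le (hC _ (hseg t (Set.Ico_subset_Icc_self ht))) (y - x))
  simpa using h

end HasGateauxDerivOn

theorem stmt2_general (y₀ : E) (ε : ℝ) (hε : 0 ≤ ε)
    (f : E → E) (Df : E → E →L[ℝ] E)
    (hgat : HasGateauxDerivOn f Df (closedBall y₀ 2))
    (hcolo : ∀ y ∈ closedBall y₀ 2,
      ⇑(Df y - Df y₀) '' closedBall (0 : E) 1 ⊆ ε • (⇑(Df y₀) '' closedBall (0 : E) 1)) :
    ∀ y₁ ∈ closedBall y₀ 2, ∀ y₂ ∈ closedBall y₀ 2,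
      ‖f y₂ - f y₁‖ ≤ (1 + ε) * ‖Df y₀‖ * ‖y₂ - y₁‖ := by
  have hDf : ∀ y ∈ closedBall y₀ 2, ‖Df y‖ ≤ (1 + ε) * ‖Df y₀‖ := fun y hy =>
    calc ‖Df y‖ = ‖Df y₀ + (Df y - Df y₀)‖ := by rw [add_sub_cancel]
      _ ≤ ‖Df y₀‖ + ε * ‖Df y₀‖ :=
        norm_add_le_of_le le_rfl
          (ContinuousLinearMap.opNorm_le_of_image_closedBall_subset hε (hcolo y hy))
      _ = (1 + ε) * ‖Df y₀‖ := by ring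
  intro y₁ hy₁ y₂ hy₂
  exact hgat.norm_sub_le_of_opNorm_le (convex_closedBall y₀ 2) hDf hy₁ hy₂

/-- under the Colombeau-type condition on the closed ball of radius 2 about `y₀`,
`f` satisfies the Lipschitz-type estimate `‖f y₂ − f y₁‖ ≤ (1 + ε) * ‖Df y₀‖ * ‖y₂ − y₁‖`
on that ball. -/
theorem stmt2 [CompleteSpace E] (y₀ : E) (ε : ℝ) (hε : 0 ≤ ε)
    (f : E → E) (Df : E → E →L[ℝ] E)
    (hgat : HasGateauxDerivOn f Df (closedBall y₀ 2))
    (hcolo : ∀ y ∈ closedBall y₀ 2,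
      ⇑(Df y - Df y₀) '' closedBall (0 : E) 1 ⊆ ε • (⇑(Df y₀) '' closedBall (0 : E) 1)) :
    ∀ y₁ ∈ closedBall y₀ 2, ∀ y₂ ∈ closedBall y₀ 2,
      ‖f y₂ - f y₁‖ ≤ (1 + ε) * ‖Df y₀‖ * ‖y₂ - y₁‖ :=
  stmt2_general y₀ ε hε f Df hgat hcolo
end

section
/- Let E be a real Banach space, let T₀ : E ≃L[ℝ] E be a continuous linear equivalence, let T₁ : E →L[ℝ] E be a continuous linear map, and let 0 ≤ ε < 1 be such that (T₁ − T₀) '' closedBall 0 1 ⊆ ε • (T₀ '' closedBall 0 1). Then T₁ is bijective (hence a continuous linear equivalence of E by the open mapping theorem), and moreover ‖T₁⁻¹ x‖ ≤ (1 − ε)⁻¹ · ‖T₀⁻¹ x‖ for every x ∈ E, and T₁ '' closedBall 0 1 ⊆ (1 + ε) • (T₀ '' closedBall 0 1). -/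
open Pointwise Metric

/-! Both ball inclusions are operator-norm bounds after composing with `T₀⁻¹`: the hypothesis says
`‖S - 1‖ ≤ ε` for `S = T₀⁻¹ T₁`. Hence `S` is invertible by the Neumann series, `‖S x‖ ≥ (1 - ε) ‖x‖`,
and `‖S‖ ≤ 1 + ε`. -/

namespace ContinuousLinearMap

variable {𝕜 E F : Type*} [NontriviallyNormedField 𝕜] [NormedAddCommGroup E] [NormedSpace 𝕜 E]
  [NormedAddCommGroup F] [NormedSpace 𝕜 F]

theorem norm_le_iff_mapsTo_closedBall [NormedAlgebra ℝ 𝕜] (f : E →L[𝕜] F) {r : ℝ} (hr : 0 ≤ r) :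
    ‖f‖ ≤ r ↔ Set.MapsTo f (closedBall 0 1) (closedBall 0 r) := by
  simp only [Set.MapsTo, mem_closedBall_zero_iff]
  refine ⟨fun h x hx => ?_, fun h => opNorm_le_of_unit_norm hr fun x hx => h hx.le⟩
  calc ‖f x‖ ≤ ‖f‖ * ‖x‖ := f.le_opNorm x
    _ ≤ r * 1 := by gcongr
    _ = r := mul_one r

theorem mul_norm_le_norm_apply_of_norm_sub_one_le (S : E →L[𝕜] E) {ε : ℝ} (hS : ‖S - 1‖ ≤ ε)
    (x : E) : (1 - ε) * ‖x‖ ≤ ‖S x‖ := by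
  have : ‖x - S x‖ ≤ ε * ‖x‖ := by
    rw [← norm_neg, neg_sub]
    exact ((S - 1).le_opNorm x).trans (by gcongr)
  linarith [norm_le_norm_sub_add x (S x)]

theorem bijective_of_norm_sub_one_lt_one [CompleteSpace E] (S : E →L[𝕜] E) (hS : ‖S - 1‖ < 1) :
    Function.Bijective S := by
  rw [← isUnit_iff_bijective]
  simpa using isUnit_one_sub_of_norm_lt_one (x := 1 - S) (by rwa [← norm_neg, neg_sub])

end ContinuousLinearMap

namespace ContinuousLinearEquiv

theorem image_closedBall_subset_smul_image_iff {E F : Type*} [NormedAddCommGroup E]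
    [NormedSpace ℝ E] [NormedAddCommGroup F] [NormedSpace ℝ F] (T : E ≃L[ℝ] F) (A : E →L[ℝ] F)
    {r : ℝ} (hr : 0 ≤ r) :
    A '' closedBall 0 1 ⊆ r • (T '' closedBall 0 1) ↔ ‖(T.symm : F →L[ℝ] E).comp A‖ ≤ r := by
  rw [← image_smul_set, smul_unitClosedBall_of_nonneg hr,
    ContinuousLinearMap.norm_le_iff_mapsTo_closedBall _ hr, ← Set.mapsTo_iff_image_subset,
    T.image_eq_preimage_symm]
  rfl

end ContinuousLinearEquiv

/-- if `T₀` is a continuous linear equivalence of a real Banach space `E`,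
`T₁` a continuous linear map with `(T₁ − T₀) '' B̄(0,1) ⊆ ε • (T₀ '' B̄(0,1))` for some
`0 ≤ ε < 1`, then `T₁` is bijective, `‖T₁⁻¹ x‖ ≤ (1 − ε)⁻¹ * ‖T₀⁻¹ x‖` for every `x`, and
`T₁ '' B̄(0,1) ⊆ (1 + ε) • (T₀ '' B̄(0,1))`. -/
theorem stmt3 {E : Type*} [NormedAddCommGroup E] [NormedSpace ℝ E] [CompleteSpace E]
    (T₀ : E ≃L[ℝ] E) (T₁ : E →L[ℝ] E) (ε : ℝ) (hε0 : 0 ≤ ε) (hε1 : ε < 1)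
    (hcolo : ⇑(T₁ - (T₀ : E →L[ℝ] E)) '' closedBall (0 : E) 1 ⊆
      ε • (⇑T₀ '' closedBall (0 : E) 1)) :
    Function.Bijective T₁ ∧
      (∀ x : E, ‖Function.invFun T₁ x‖ ≤ (1 - ε)⁻¹ * ‖T₀.symm x‖) ∧
      ⇑T₁ '' closedBall (0 : E) 1 ⊆ (1 + ε) • (⇑T₀ '' closedBall (0 : E) 1) := by
  set S : E →L[ℝ] E := (T₀.symm : E →L[ℝ] E).comp T₁
  have hS : ‖S - 1‖ ≤ ε := by
    rwa [T₀.image_closedBall_subset_smul_image_iff _ hε0, ContinuousLinearMap.comp_sub,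
      T₀.coe_symm_comp_coe] at hcolo
  have hbij : Function.Bijective T₁ :=
    (T₀.symm.bijective.of_comp_iff' T₁).1 (S.bijective_of_norm_sub_one_lt_one (hS.trans_lt hε1))
  refine ⟨hbij, fun y => ?_, ?_⟩
  · obtain ⟨x, rfl⟩ := hbij.surjective y
    rw [Function.leftInverse_invFun hbij.injective x, le_inv_mul_iff₀ (by linarith)]
    exact S.mul_norm_le_norm_apply_of_norm_sub_one_le hS x
  · rw [T₀.image_closedBall_subset_smul_image_iff _ (by linarith)]
    calc ‖S‖ = ‖(S - 1) + 1‖ := by rw [sub_add_cancel]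
      _ ≤ ε + 1 := norm_add_le_of_le hS ContinuousLinearMap.norm_id_le
      _ = 1 + ε := add_comm ε 1
end

section
/- Let E be a real Banach space, y₀ ∈ E, ε ≥ 0, let T₀ : E ≃L[ℝ] E be a continuous linear equivalence with inverse ℓ = T₀⁻¹, and let f : E → E and Df : E → (E →L[ℝ] E) be such that Df y₀ = T₀ (as a map), Df is a Gateaux derivative of f on the closed ball of radius 2 centred at y₀, and for every y in that closed ball (Df y − Df y₀) '' closedBall 0 1 ⊆ ε • ((Df y₀) '' closedBall 0 1). Then for all y₈, y₉ in the closed ball of radius 2 centred at y₀, the map f₁ := (y ↦ y − ℓ (f y)) satisfies ‖f₁ y₈ − f₁ y₉‖ ≤ ε · ‖y₈ − y₉‖. -/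
open Pointwise Metric

variable {E : Type*} [NormedAddCommGroup E] [NormedSpace ℝ E]

/-- with `ℓ = T₀⁻¹`, `Df y₀ = T₀`, and the Colombeau-type condition on the
closed ball of radius 2 about `y₀`, the map `f₁ : y ↦ y − ℓ (f y)` satisfies
`‖f₁ y₈ − f₁ y₉‖ ≤ ε * ‖y₈ − y₉‖` on that ball. -/
theorem stmt4 [CompleteSpace E] (y₀ : E) (ε : ℝ) (hε : 0 ≤ ε)
    (T₀ : E ≃L[ℝ] E) (f : E → E) (Df : E → E →L[ℝ] E)
    (hDfy₀ : ⇑(Df y₀) = ⇑T₀)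
    (hgat : HasGateauxDerivOn f Df (closedBall y₀ 2))
    (hcolo : ∀ y ∈ closedBall y₀ 2,
      ⇑(Df y - Df y₀) '' closedBall (0 : E) 1 ⊆ ε • (⇑(Df y₀) '' closedBall (0 : E) 1)) :
    ∀ y₈ ∈ closedBall y₀ 2, ∀ y₉ ∈ closedBall y₀ 2,
      ‖(y₈ - T₀.symm (f y₈)) - (y₉ - T₀.symm (f y₉))‖ ≤ ε * ‖y₈ - y₉‖ := by
  -- key pointwise bound
  have key : ∀ y ∈ closedBall y₀ 2, ∀ v : E,
      ‖T₀.symm ((Df y - Df y₀) v)‖ ≤ ε * ‖v‖ := by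
    intro y hy v
    rcases eq_or_ne v 0 with rfl | hv
    · simp
    · have hnv : (0:ℝ) < ‖v‖ := norm_pos_iff.mpr hv
      set v' : E := ‖v‖⁻¹ • v with hv'def
      have hv'mem : v' ∈ closedBall (0 : E) 1 := by
        rw [mem_closedBall_zero_iff, hv'def, norm_smul, norm_inv, norm_norm,
          inv_mul_cancel₀ hnv.ne']
      have hmem := hcolo y hy ⟨v', hv'mem, rfl⟩
      rcases hmem with ⟨w, ⟨u, hu, rfl⟩, hw⟩
      -- hw : ε • Df y₀ u = (Df y - Df y₀) v'
      have hT : T₀.symm ((Df y - Df y₀) v') = ε • u := by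
        rw [← hw, hDfy₀]
        simp
      have hvv : v = ‖v‖ • v' := by
        rw [hv'def, smul_smul, mul_inv_cancel₀ hnv.ne', one_smul]
      have : T₀.symm ((Df y - Df y₀) v) = ‖v‖ • (ε • u) := by
        conv_lhs => rw [hvv, map_smul, map_smul, hT]
      rw [this, norm_smul, norm_smul]
      have hu1 : ‖u‖ ≤ 1 := mem_closedBall_zero_iff.mp hu
      calc ‖(‖v‖:ℝ)‖ * (‖ε‖ * ‖u‖) ≤ ‖v‖ * (ε * 1) := by
            rw [norm_norm, Real.norm_of_nonneg hε]
            exact mul_le_mul_of_nonneg_left (mul_le_mul_of_nonneg_left hu1 hε) hnv.le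
        _ = ε * ‖v‖ := by ring
  intro y₈ h₈ y₉ h₉
  set v : E := y₈ - y₉ with hvdef
  set g : ℝ → E := fun t => (y₉ + t • v) - T₀.symm (f (y₉ + t • v)) with hgdef
  have hseg : ∀ t ∈ Set.Icc (0:ℝ) 1, y₉ + t • v ∈ closedBall y₀ 2 := by
    intro t ht
    have : y₉ + t • v = (1 - t) • y₉ + t • y₈ := by
      rw [hvdef]; module
    rw [this]
    exact (convex_closedBall y₀ 2) h₉ h₈ (by linarith [ht.1, ht.2]) ht.1 (by ring)
  have hderiv : ∀ t ∈ Set.Icc (0:ℝ) 1,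
      HasDerivAt g (-(T₀.symm ((Df (y₉ + t • v) - Df y₀) v))) t := by
    intro t ht
    set y' := y₉ + t • v with hy'
    have hf : HasDerivAt (fun s : ℝ => f (y' + s • v)) (Df y' v) 0 :=
      hgat y' (hseg t ht) v
    -- reparametrize: s ↦ t' - t
    have hshift : HasDerivAt (fun t' : ℝ => t' - t) 1 t := by
      simpa using (hasDerivAt_id t).sub_const t
    have hf2 : HasDerivAt (fun t' : ℝ => f (y' + (t' - t) • v)) (Df y' v) t := by
      have := HasDerivAt.scomp t (by simpa using hf) hshift
      simpa [Function.comp_def] using this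
    have heq : (fun t' : ℝ => f (y' + (t' - t) • v)) = fun t' : ℝ => f (y₉ + t' • v) := by
      funext t'
      congr 1
      rw [hy']
      module
    rw [heq] at hf2
    have hlin : HasDerivAt (fun t' : ℝ => y₉ + t' • v) v t := by
      simpa using ((hasDerivAt_id t).smul_const v).const_add y₉
    have hcomp : HasDerivAt (fun t' : ℝ => T₀.symm (f (y₉ + t' • v)))
        (T₀.symm (Df y' v)) t :=
      (T₀.symm : E →L[ℝ] E).hasFDerivAt.comp_hasDerivAt t hf2
    have := hlin.sub hcomp
    convert this using 1
    · rfl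
    have hv0 : T₀.symm (Df y₀ v) = v := by
      rw [hDfy₀]; exact T₀.symm_apply_apply v
    rw [ContinuousLinearMap.sub_apply, map_sub, hv0]
    abel
  have hbound : ∀ t ∈ Set.Icc (0:ℝ) 1,
      ‖-(T₀.symm ((Df (y₉ + t • v) - Df y₀) v))‖ ≤ ε * ‖v‖ := by
    intro t ht
    rw [norm_neg]
    exact key _ (hseg t ht) v
  have := norm_image_sub_le_of_norm_deriv_le_segment'
    (fun t ht => (hderiv t ht).hasDerivWithinAt)
    (fun t ht => hbound t ⟨ht.1, ht.2.le⟩) 1 ⟨zero_le_one, le_refl 1⟩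
  simp only [hgdef, one_smul, zero_smul, add_zero] at this
  have hg1 : y₉ + v = y₈ := by rw [hvdef]; abel
  rw [hg1] at this
  simpa using this
end

section
/- Let E be a real Banach space, y₀ ∈ E, 0 ≤ ε < 1, let T₀ : E ≃L[ℝ] E be a continuous linear equivalence, and let f : E → E and Df : E → (E →L[ℝ] E) be such that Df y₀ = T₀ (as a map), Df is a Gateaux derivative of f on the closed ball of radius 2 centred at y₀, and for every y in that closed ball (Df y − Df y₀) '' closedBall 0 1 ⊆ ε • ((Df y₀) '' closedBall 0 1). Then f is injective on the closed ball of radius 2 centred at y₀: if y₁, y₂ lie in that ball and f y₁ = f y₂, then y₁ = y₂. -/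
open Pointwise Metric

variable {E : Type*} [NormedAddCommGroup E] [NormedSpace ℝ E]

/-!
The image condition says exactly that `‖T₀⁻¹ ((Df y - T₀) v)‖ ≤ ε ‖v‖` on the ball. For `y₁, y₂`
in the ball put `v = y₂ - y₁` and `g t = T₀⁻¹ (f (y₁ + t • v)) - t • v`; by convexity the segment
stays in the ball, where `g' t = T₀⁻¹ ((Df (y₁ + t • v) - T₀) v)` has norm at most `ε ‖v‖`. The
mean value inequality gives `‖T₀⁻¹ (f y₂ - f y₁) - v‖ ≤ ε ‖v‖`, so `f y₁ = f y₂` forces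
`‖v‖ ≤ ε ‖v‖`, i.e. `v = 0` since `ε < 1`.
-/

open Set

variable {F : Type*} [NormedAddCommGroup F] [NormedSpace ℝ F]

theorem ContinuousLinearEquiv.norm_symm_apply_le_of_image_closedBall_subset (T : E ≃L[ℝ] F)
    (S : E →L[ℝ] F) {ε : ℝ} (hε : 0 ≤ ε)
    (h : ⇑S '' closedBall 0 1 ⊆ ε • (⇑T '' closedBall 0 1)) (v : E) :
    ‖T.symm (S v)‖ ≤ ε * ‖v‖ := by
  refine ((T.symm : F →L[ℝ] E).comp S).le_of_opNorm_le
    (ContinuousLinearMap.opNorm_le_of_unit_norm hε fun x hx => ?_) v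
  obtain ⟨_, ⟨w, hw, rfl⟩, hSx⟩ := h ⟨x, by simp [hx], rfl⟩
  simp only [ContinuousLinearMap.comp_apply, ContinuousLinearEquiv.coe_coe, ← hSx, map_smul,
    T.symm_apply_apply, norm_smul, Real.norm_of_nonneg hε]
  exact mul_le_of_le_one_right hε (mem_closedBall_zero_iff.1 hw)

namespace HasGateauxDerivOn

variable {f : E → E} {Df : E → E →L[ℝ] E} {s : Set E}

theorem hasDerivAt_add_smul (hf : HasGateauxDerivOn f Df s) {y v : E} {t : ℝ}
    (ht : y + t • v ∈ s) : HasDerivAt (fun r : ℝ => f (y + r • v)) (Df (y + t • v) v) t := by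
  have h₀ := hf _ ht v
  rw [← sub_self t] at h₀
  convert h₀.comp_sub_const t t using 3 with r
  module

theorem norm_symm_sub_sub_le (hf : HasGateauxDerivOn f Df s) (hs : Convex ℝ s)
    (T : E ≃L[ℝ] E) {ε : ℝ}
    (hε : ∀ y ∈ s, ∀ v, ‖T.symm (Df y v - T v)‖ ≤ ε * ‖v‖)
    {y₁ y₂ : E} (hy₁ : y₁ ∈ s) (hy₂ : y₂ ∈ s) :
    ‖T.symm (f y₂ - f y₁) - (y₂ - y₁)‖ ≤ ε * ‖y₂ - y₁‖ := by
  set v := y₂ - y₁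
  have hseg : ∀ t ∈ Icc (0 : ℝ) 1, y₁ + t • v ∈ s := fun t ht => hs.add_smul_sub_mem hy₁ hy₂ ht
  have hderiv : ∀ t ∈ Icc (0 : ℝ) 1,
      HasDerivWithinAt (fun r : ℝ => T.symm (f (y₁ + r • v)) - r • v)
        (T.symm (Df (y₁ + t • v) v - T v)) (Icc 0 1) t := by
    intro t ht
    have h := ((T.symm : E →L[ℝ] E).hasFDerivAt.comp_hasDerivAt t
      (hf.hasDerivAt_add_smul (hseg t ht))).sub ((hasDerivAt_id t).smul_const v)
    convert h.hasDerivWithinAt using 1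
    · ext r
      simp
    · simp
  have hmvt := norm_image_sub_le_of_norm_deriv_le_segment_01' hderiv
    fun t ht => hε _ (hseg t (Ico_subset_Icc_self ht)) v
  convert hmvt using 2
  simp only [v, one_smul, zero_smul, add_zero, add_sub_cancel, map_sub]
  abel

theorem injOn_of_norm_symm_sub_le (hf : HasGateauxDerivOn f Df s) (hs : Convex ℝ s)
    (T : E ≃L[ℝ] E) {ε : ℝ}
    (hε : ∀ y ∈ s, ∀ v, ‖T.symm (Df y v - T v)‖ ≤ ε * ‖v‖)
    (hε1 : ε < 1) : InjOn f s := by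
  intro y₁ hy₁ y₂ hy₂ hf₁₂
  have h := hf.norm_symm_sub_sub_le hs T hε hy₁ hy₂
  rw [hf₁₂, sub_self, map_zero, zero_sub, norm_neg] at h
  have hv : ‖y₂ - y₁‖ = 0 := by nlinarith [norm_nonneg (y₂ - y₁)]
  exact (sub_eq_zero.1 (norm_eq_zero.1 hv)).symm

end HasGateauxDerivOn

theorem stmt5_general (y₀ : E) (ε : ℝ) (hε0 : 0 ≤ ε) (hε1 : ε < 1)
    (T₀ : E ≃L[ℝ] E) (f : E → E) (Df : E → E →L[ℝ] E)
    (hDfy₀ : ⇑(Df y₀) = ⇑T₀)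
    (hgat : HasGateauxDerivOn f Df (closedBall y₀ 2))
    (hcolo : ∀ y ∈ closedBall y₀ 2,
      ⇑(Df y - Df y₀) '' closedBall (0 : E) 1 ⊆ ε • (⇑(Df y₀) '' closedBall (0 : E) 1)) :
    ∀ y₁ ∈ closedBall y₀ 2, ∀ y₂ ∈ closedBall y₀ 2, f y₁ = f y₂ → y₁ = y₂ := by
  have hbound : ∀ y ∈ closedBall y₀ 2, ∀ v, ‖T₀.symm (Df y v - T₀ v)‖ ≤ ε * ‖v‖ := by
    intro y hy v
    have h := T₀.norm_symm_apply_le_of_image_closedBall_subset _ hε0 (hDfy₀ ▸ hcolo y hy) v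
    rwa [sub_apply, congrFun hDfy₀ v] at h
  exact fun y₁ hy₁ y₂ hy₂ =>
    hgat.injOn_of_norm_symm_sub_le (convex_closedBall y₀ 2) T₀ hbound hε1 hy₁ hy₂

/-- with `Df y₀ = T₀` a continuous linear equivalence, `0 ≤ ε < 1`, and the
Colombeau-type condition on the closed ball of radius 2 about `y₀`, the map `f` is injective
on that ball. -/
theorem stmt5 [CompleteSpace E] (y₀ : E) (ε : ℝ) (hε0 : 0 ≤ ε) (hε1 : ε < 1)
    (T₀ : E ≃L[ℝ] E) (f : E → E) (Df : E → E →L[ℝ] E)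
    (hDfy₀ : ⇑(Df y₀) = ⇑T₀)
    (hgat : HasGateauxDerivOn f Df (closedBall y₀ 2))
    (hcolo : ∀ y ∈ closedBall y₀ 2,
      ⇑(Df y - Df y₀) '' closedBall (0 : E) 1 ⊆ ε • (⇑(Df y₀) '' closedBall (0 : E) 1)) :
    ∀ y₁ ∈ closedBall y₀ 2, ∀ y₂ ∈ closedBall y₀ 2, f y₁ = f y₂ → y₁ = y₂ :=
  stmt5_general y₀ ε hε0 hε1 T₀ f Df hDfy₀ hgat hcolo
end

section
/- Let E be a real Banach space, y₀ ∈ E, 0 ≤ ε ≤ 1/2, let T₀ : E ≃L[ℝ] E be a continuous linear equivalence with inverse ℓ = T₀⁻¹, and let f : E → E and Df : E → (E →L[ℝ] E) be such that Df y₀ = T₀ (as a map), Df is a Gateaux derivative of f on the closed ball of radius 2 centred at y₀, and for every y in that closed ball (Df y − Df y₀) '' closedBall 0 1 ⊆ ε • ((Df y₀) '' closedBall 0 1). Set x₀ = f y₀. Then there exist an open set V ⊆ E and a map g : E → E such that: x₀ ∈ V, V ⊆ x₀ + T₀ '' closedBall 0 1, g x₀ = y₀, for every x ∈ V one has g x in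 the closed ball of radius 2 centred at y₀ and f (g x) = x, and for all x₁, x₂ ∈ V one has ‖g x₁ − g x₂‖ ≤ (1 − ε)⁻¹ · ‖ℓ (x₁ − x₂)‖. -/
open Pointwise Metric

variable {E : Type*} [NormedAddCommGroup E] [NormedSpace ℝ E]

/-!
Composing with `ℓ = T₀⁻¹`, the condition on `Df` says exactly that every `ℓ ∘ Df y` lies within
`ε` of the identity in operator norm on the ball `B = closedBall y₀ 2`. Integrating the Gateaux
derivative along segments (the ball is convex), `h = ℓ ∘ f` then approximates the identity on `B`
with constant `ε`. Hence `h` maps `B` onto the ball of radius `2 (1 - ε) ≥ 1` about `h y₀`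
(the Newton-type iteration behind the inverse function theorem), and
`‖y₁ - y₂‖ ≤ (1 - ε)⁻¹ ‖h y₁ - h y₂‖` on `B`. Taking `V = ℓ⁻¹ (ball (h y₀) 1)` and `g x` a
preimage of `ℓ x` in `B` gives the local inverse.
-/

open Set Function NNReal

namespace ContinuousLinearEquiv

variable {F : Type*} [NormedAddCommGroup F] [NormedSpace ℝ F]

theorem norm_symm_comp_sub_id_le_of_image_closedBall_subset
    (T : E ≃L[ℝ] F) (D : E →L[ℝ] F) {ε : ℝ} (hε : 0 ≤ ε)
    (hD : ⇑(D - T) '' closedBall (0 : E) 1 ⊆ ε • (⇑T '' closedBall (0 : E) 1)) :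
    ‖(T.symm : F →L[ℝ] E).comp D - ContinuousLinearMap.id ℝ E‖ ≤ ε := by
  refine ContinuousLinearMap.opNorm_le_of_unit_norm hε fun u hu => ?_
  obtain ⟨_, ⟨w, hw, rfl⟩, hDu⟩ := hD ⟨u, by simp [hu], rfl⟩
  replace hDu : ε • T w = D u - T u := hDu
  rw [mem_closedBall_zero_iff] at hw
  calc ‖T.symm (D u) - u‖ = ‖T.symm (D u - T u)‖ := by rw [map_sub, symm_apply_apply]
    _ = ε * ‖w‖ := by rw [← hDu, T.symm.map_smul, symm_apply_apply, norm_smul, Real.norm_of_nonneg hε]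
    _ ≤ ε := mul_le_of_le_one_right hε hw

theorem symm_preimage_ball_subset (T : E ≃L[ℝ] F) (x : F) (r : ℝ) :
    T.symm ⁻¹' ball (T.symm x) r ⊆ (x + ·) '' (T '' closedBall 0 r) := by
  intro z hz
  refine ⟨T (T.symm (z - x)), ⟨T.symm (z - x), ?_, rfl⟩, by simp⟩
  rw [mem_closedBall_zero_iff, map_sub, ← dist_eq_norm]
  exact le_of_lt hz

end ContinuousLinearEquiv

namespace HasGateauxDerivOn

variable {f : E → E} {Df : E → E →L[ℝ] E} {s : Set E}

theorem clm_comp (hf : HasGateauxDerivOn f Df s) (ℓ : E →L[ℝ] E) :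
    HasGateauxDerivOn (ℓ ∘ f) (fun y => ℓ.comp (Df y)) s :=
  fun y hy v => ℓ.hasFDerivAt.comp_hasDerivAt 0 (hf y hy v)

theorem hasDerivAt_line (hf : HasGateauxDerivOn f Df s) {y v : E} {t : ℝ}
    (hyt : y + t • v ∈ s) :
    HasDerivAt (fun t : ℝ => f (y + t • v)) (Df (y + t • v) v) t := by
  have h : HasDerivAt (fun s : ℝ => f (y + t • v + s • v)) (Df (y + t • v) v) (t - t) := by
    rw [sub_self]
    exact hf _ hyt v
  replace h := h.comp_sub_const t t
  refine h.congr_of_eventuallyEq (Filter.Eventually.of_forall fun t' => ?_)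
  simp only [sub_smul, add_add_sub_cancel]

theorem approximatesLinearOn (hf : HasGateauxDerivOn f Df s) (hs : Convex ℝ s)
    {L : E →L[ℝ] E} {c : ℝ≥0} (hDf : ∀ y ∈ s, ‖Df y - L‖ ≤ c) :
    ApproximatesLinearOn f L s c := by
  intro y₁ hy₁ y₂ hy₂
  set v := y₁ - y₂
  have hseg : ∀ t ∈ Icc (0 : ℝ) 1, y₂ + t • v ∈ s := fun t ht =>
    hs.add_smul_sub_mem hy₂ hy₁ ht
  have hderiv : ∀ t ∈ Icc (0 : ℝ) 1, HasDerivWithinAt (fun t : ℝ => f (y₂ + t • v) - t • L v)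
      ((Df (y₂ + t • v) - L) v) (Icc 0 1) t := fun t ht => by
    convert ((hf.hasDerivAt_line (hseg t ht)).sub
      ((hasDerivAt_id t).smul_const (L v))).hasDerivWithinAt using 1
    · rfl
    · rw [sub_apply, one_smul]
  have hbound : ∀ t ∈ Ico (0 : ℝ) 1, ‖(Df (y₂ + t • v) - L) v‖ ≤ c * ‖v‖ := fun t ht =>
    (ContinuousLinearMap.le_opNorm _ v).trans <|
      mul_le_mul_of_nonneg_right (hDf _ (hseg t (Ico_subset_Icc_self ht))) (norm_nonneg v)
  have hmvt := norm_image_sub_le_of_norm_deriv_le_segment_01' hderiv hbound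
  simpa only [one_smul, zero_smul, add_zero, v, add_sub_cancel, sub_zero, sub_right_comm]
    using hmvt

end HasGateauxDerivOn

namespace ApproximatesLinearOn

variable {h : E → E} {s : Set E} {c : ℝ≥0}

theorem norm_sub_le_of_id (hh : ApproximatesLinearOn h (ContinuousLinearMap.id ℝ E) s c)
    (hc : c < 1) {y₁ y₂ : E} (hy₁ : y₁ ∈ s) (hy₂ : y₂ ∈ s) :
    ‖y₁ - y₂‖ ≤ (1 - c : ℝ)⁻¹ * ‖h y₁ - h y₂‖ := by
  have hc' : (0 : ℝ) < 1 - c := sub_pos.2 (by exact_mod_cast hc)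
  rw [le_inv_mul_iff₀ hc']
  have happrox := hh y₁ hy₁ y₂ hy₂
  have htriangle := norm_sub_norm_le (y₁ - y₂) (h y₁ - h y₂)
  rw [ContinuousLinearMap.id_apply] at happrox
  rw [norm_sub_rev (y₁ - y₂)] at htriangle
  rw [sub_mul, one_mul]
  linarith

theorem surjOn_closedBall_of_id [CompleteSpace E] {y : E} {r : ℝ}
    (hh : ApproximatesLinearOn h (ContinuousLinearMap.id ℝ E) (closedBall y r) c) (hr : 0 ≤ r) :
    SurjOn h (closedBall y r) (closedBall (h y) ((1 - c) * r)) := by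
  simpa using hh.surjOn_closedBall_of_nonlinearRightInverse
    ⟨id, 1, fun _ => by simp, fun _ => rfl⟩ hr subset_rfl

theorem injOn_of_id (hh : ApproximatesLinearOn h (ContinuousLinearMap.id ℝ E) s c) (hc : c < 1) :
    InjOn h s := fun y₁ hy₁ y₂ hy₂ heq => by
  simpa [heq, sub_eq_zero] using hh.norm_sub_le_of_id hc hy₁ hy₂

theorem exists_rightInvOn_closedBall_of_id [CompleteSpace E] {y : E} {r : ℝ}
    (hh : ApproximatesLinearOn h (ContinuousLinearMap.id ℝ E) (closedBall y r) c) (hc : c < 1)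
    (hr : 0 ≤ r) :
    ∃ g : E → E, MapsTo g (closedBall (h y) ((1 - c) * r)) (closedBall y r) ∧
      RightInvOn g h (closedBall (h y) ((1 - c) * r)) ∧ g (h y) = y ∧
      ∀ z₁ ∈ closedBall (h y) ((1 - c) * r), ∀ z₂ ∈ closedBall (h y) ((1 - c) * r),
        ‖g z₁ - g z₂‖ ≤ (1 - c : ℝ)⁻¹ * ‖z₁ - z₂‖ := by
  have hsurj := hh.surjOn_closedBall_of_id hr
  refine ⟨invFunOn h (closedBall y r), hsurj.mapsTo_invFunOn, hsurj.rightInvOn_invFunOn,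
    (hh.injOn_of_id hc).leftInvOn_invFunOn (mem_closedBall_self hr), fun z₁ hz₁ z₂ hz₂ => ?_⟩
  have h_norm := hh.norm_sub_le_of_id hc (hsurj.mapsTo_invFunOn hz₁) (hsurj.mapsTo_invFunOn hz₂)
  rwa [hsurj.rightInvOn_invFunOn hz₁, hsurj.rightInvOn_invFunOn hz₂] at h_norm

end ApproximatesLinearOn

/-- local inverse function (Lemma 7 of the paper, Banach-space case). With
`Df y₀ = T₀`, `ℓ = T₀⁻¹`, `0 ≤ ε ≤ 1/2` and the Colombeau-type condition on the closed
ball of radius 2 about `y₀`, there is an open neighbourhood `V` of `x₀ = f y₀` contained in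
`x₀ + T₀ '' B̄(0,1)` and a right inverse `g` of `f` on `V` with `g x₀ = y₀`, values in the
closed 2-ball about `y₀`, and `‖g x₁ − g x₂‖ ≤ (1 − ε)⁻¹ * ‖ℓ (x₁ − x₂)‖` on `V`. -/
theorem stmt6 [CompleteSpace E] (y₀ : E) (ε : ℝ) (hε0 : 0 ≤ ε) (hε1 : ε ≤ 1 / 2)
    (T₀ : E ≃L[ℝ] E) (f : E → E) (Df : E → E →L[ℝ] E)
    (hDfy₀ : ⇑(Df y₀) = ⇑T₀)
    (hgat : HasGateauxDerivOn f Df (closedBall y₀ 2))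
    (hcolo : ∀ y ∈ closedBall y₀ 2,
      ⇑(Df y - Df y₀) '' closedBall (0 : E) 1 ⊆ ε • (⇑(Df y₀) '' closedBall (0 : E) 1)) :
    ∃ (V : Set E) (g : E → E), IsOpen V ∧ f y₀ ∈ V ∧
      V ⊆ (f y₀ + ·) '' (⇑T₀ '' closedBall (0 : E) 1) ∧
      g (f y₀) = y₀ ∧
      (∀ x ∈ V, g x ∈ closedBall y₀ 2 ∧ f (g x) = x) ∧
      ∀ x₁ ∈ V, ∀ x₂ ∈ V, ‖g x₁ - g x₂‖ ≤ (1 - ε)⁻¹ * ‖T₀.symm (x₁ - x₂)‖ := by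
  set ℓ : E →L[ℝ] E := (T₀.symm : E →L[ℝ] E)
  set c : ℝ≥0 := ⟨ε, hε0⟩
  have hc : c < 1 := NNReal.coe_lt_coe.1 (show ε < 1 by linarith)
  have hT₀ : Df y₀ = T₀ := ContinuousLinearMap.ext (congrFun hDfy₀)
  have hℓDf : ∀ y ∈ closedBall y₀ 2, ‖ℓ.comp (Df y) - ContinuousLinearMap.id ℝ E‖ ≤ c :=
    fun y hy => T₀.norm_symm_comp_sub_id_le_of_image_closedBall_subset _ hε0 (by
      have h := hcolo y hy
      rwa [hDfy₀, hT₀] at h)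
  have happrox := (hgat.clm_comp ℓ).approximatesLinearOn (convex_closedBall y₀ 2) hℓDf
  obtain ⟨G, hG_mem, hG_inv, hG_y₀, hG_lip⟩ :=
    happrox.exists_rightInvOn_closedBall_of_id hc zero_le_two
  have hV : ℓ ⁻¹' ball (ℓ (f y₀)) 1 ⊆ ℓ ⁻¹' closedBall (ℓ (f y₀)) ((1 - c) * 2) :=
    preimage_mono <| ball_subset_closedBall.trans
      (closedBall_subset_closedBall (show 1 ≤ (1 - ε) * 2 by linarith))
  refine ⟨ℓ ⁻¹' ball (ℓ (f y₀)) 1, G ∘ ℓ, isOpen_ball.preimage ℓ.continuous, mem_ball_self one_pos,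
    T₀.symm_preimage_ball_subset _ _, hG_y₀, fun x hx => ⟨hG_mem (hV hx), ?_⟩,
    fun x₁ hx₁ x₂ hx₂ => ?_⟩
  · exact T₀.symm.injective (hG_inv (hV hx))
  · have h_lip := hG_lip _ (hV hx₁) _ (hV hx₂)
    rwa [← map_sub] at h_lip
end

section
/- Let E be a metrizable real topological vector space. Then every mopen subset of E is open; consequently the Mackey closure topology of E coincides with the original topology. -/
variable {E : Type*} [AddCommGroup E] [Module ℝ E] [TopologicalSpace E]

open Set Filter Bornology Topology

lemma finite_isVonNBounded [IsTopologicalAddGroup E] [ContinuousSMul ℝ E] {s : Set E}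
    (hs : s.Finite) : IsVonNBounded ℝ s := by
  have : s = ⋃ x ∈ s, {x} := by simp
  rw [this]
  exact (Bornology.isVonNBounded_biUnion hs).2 fun x _ => Bornology.isVonNBounded_singleton x

lemma tendsto_isVonNBounded_range [IsTopologicalAddGroup E] [ContinuousSMul ℝ E]
    {u : ℕ → E} (hu : Tendsto u atTop (𝓝 0)) : IsVonNBounded ℝ (Set.range u) := by
  rw [(nhds_basis_balanced ℝ E).isVonNBounded_iff]
  rintro W ⟨hW, hWb⟩
  obtain ⟨m, hm⟩ := (eventually_atTop).1 (hu.eventually (eventually_mem_set.mpr hW))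
  have hsub : Set.range u ⊆ (u '' Set.Iio m) ∪ W := by
    rintro _ ⟨n, rfl⟩
    rcases lt_or_ge n m with h | h
    · exact Or.inl ⟨n, h, rfl⟩
    · exact Or.inr (hm n h)
  refine Absorbs.mono_right ?_ hsub
  exact ((finite_isVonNBounded ((Set.finite_Iio m).image u)) hW).union hWb.absorbs_self

/-- A set `U` in a real topological vector space is *mopen* if for every `x ∈ U` and every
von Neumann bounded set `B` there is `δ > 0` such that `x + t • B ⊆ U` for all `0 ≤ t ≤ δ`. -/
def Mopen (U : Set E) : Prop :=
  ∀ x ∈ U, ∀ B : Set E, Bornology.IsVonNBounded ℝ B →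
    ∃ δ : ℝ, 0 < δ ∧ ∀ t : ℝ, 0 ≤ t → t ≤ δ → ∀ b ∈ B, x + t • b ∈ U

/-- in a metrizable real topological vector space every mopen set is open, so
the Mackey closure topology coincides with the original topology: a set is mopen iff it
is open. -/
theorem stmt9 [IsTopologicalAddGroup E] [ContinuousSMul ℝ E]
    [TopologicalSpace.MetrizableSpace E] :
    ∀ U : Set E, Mopen U ↔ IsOpen U := by
  letI := TopologicalSpace.metrizableSpaceMetric E
  intro U
  constructor
  · -- mopen → open
    intro hU
    by_contra hop
    rw [isOpen_iff_mem_nhds] at hop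
    push_neg at hop
    obtain ⟨x, hxU, hxn⟩ := hop
    have hxcl : x ∈ closure Uᶜ := by
      rw [mem_closure_iff_nhds]
      intro V hV
      rcases (V ∩ Uᶜ).eq_empty_or_nonempty with h | h
      · exact absurd (mem_of_superset hV fun y hy => by
          by_contra hyU
          exact (Set.eq_empty_iff_forall_notMem.1 h y) ⟨hy, hyU⟩) hxn
      · exact h
    obtain ⟨z, hz, hzx⟩ := mem_closure_iff_seq_limit.1 hxcl
    -- z n ∉ U, z n → x
    obtain ⟨V, hV⟩ := (𝓝 (0 : E)).exists_antitone_basis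
    have hy : Tendsto (fun n => z n - x) atTop (𝓝 0) := by
      simpa using hzx.sub_const x
    have hk : ∀ k : ℕ, ∀ᶠ n in atTop, ((k : ℝ) + 1) • (z n - x) ∈ V k := by
      intro k
      have : Tendsto (fun n => ((k : ℝ) + 1) • (z n - x)) atTop (𝓝 0) := by
        simpa using hy.const_smul ((k : ℝ) + 1)
      exact this.eventually (eventually_mem_set.mpr (hV.mem k))
    obtain ⟨φ, hφmono, hφ⟩ := extraction_forall_of_eventually
      (fun k => (hk k))
    set b : ℕ → E := fun k => ((k : ℝ) + 1) • (z (φ k) - x) with hb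
    have hbtend : Tendsto b atTop (𝓝 0) := by
      rw [hV.toHasBasis.tendsto_right_iff]
      intro i _
      filter_upwards [eventually_ge_atTop i] with k hik
      exact hV.antitone hik (hφ k)
    obtain ⟨δ, hδ, hδU⟩ := hU x hxU (Set.range b) (tendsto_isVonNBounded_range hbtend)
    obtain ⟨k, hkδ⟩ := exists_nat_gt (1 / δ)
    have hk1 : (0 : ℝ) < (k : ℝ) + 1 := by positivity
    have ht1 : (1 : ℝ) / ((k : ℝ) + 1) ≤ δ := by
      rw [div_le_iff₀ hk1]
      rw [div_lt_iff₀ hδ] at hkδ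
      nlinarith [hδ.le]
    have := hδU (1 / ((k : ℝ) + 1)) (by positivity) ht1 (b k) ⟨k, rfl⟩
    rw [hb] at this
    simp only [smul_smul, one_div, inv_mul_cancel₀ hk1.ne'] at this
    rw [one_smul] at this
    have : z (φ k) ∈ U := by simpa using this
    exact hz (φ k) this
  · -- open → mopen
    intro hU x hxU B hB
    set V : Set E := (fun y => x + y) ⁻¹' U with hVdef
    have hV : V ∈ 𝓝 (0 : E) := by
      have : Continuous (fun y : E => x + y) := continuous_const.add continuous_id
      apply this.continuousAt.preimage_mem_nhds
      simpa using hU.mem_nhds hxU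
    obtain ⟨r, hr⟩ := absorbs_iff_norm.1 (hB hV)
    set r' : ℝ := max r 1 with hr'
    refine ⟨1 / r', by positivity, ?_⟩
    intro t ht0 htδ c hc
    rcases eq_or_lt_of_le ht0 with h | h
    · simpa [← h] using hxU
    · have hrt : r ≤ ‖(1 / t : ℝ)‖ := by
        rw [Real.norm_eq_abs, abs_of_pos (by positivity)]
        calc r ≤ r' := le_max_left _ _
          _ ≤ 1 / t := by
            rw [le_div_iff₀ h]
            have hr'pos : (0:ℝ) < r' := lt_of_lt_of_le zero_lt_one (le_max_right r 1)
            rw [le_div_iff₀ hr'pos] at htδ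
            nlinarith
      obtain ⟨v, hv, rfl⟩ := hr (1 / t) hrt hc
      have : t • (1 / t) • v = v := by
        rw [smul_smul, mul_one_div, div_self h.ne', one_smul]
      rw [this]
      exact hv
end
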